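/- Let n ≥ 4 and let α, β ∈ K satisfy α ≠ β and α ≠ −β. If T : Mat_n(K) → Mat_n(K) is a bijective K-linear map that stabilizes det^{(α,β)}, then there exist permutations σ, τ ∈ S_n with sgn(σ)·sgn(τ) = 1, with associated permutation matrices P = (δ_{i,σ(j)}) and Q = (δ_{i,τ(j)}), and a matrix C = (c_{ij}) ∈ Mat_n(K) with every entry c_{ij} nonzero, such that either T(A) = C ∗ (P·A·Q) for all A ∈ Mat_n(K), or T(A) = C ∗ (P·Aᵀ·Q) for all A ∈ Mat_n(K), where ∗ denotes the entrywise (Hadamard) product. -/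
import Mathlib

open Matrix Finset

noncomputable def evenDet {K : Type*} [Field K] {n : ℕ} (A : Matrix (Fin n) (Fin n) K) : K :=
  ∑ σ ∈ Finset.univ.filter (fun σ : Equiv.Perm (Fin n) => Equiv.Perm.sign σ = 1),
    ∏ i, A i (σ i)

noncomputable def oddDet {K : Type*} [Field K] {n : ℕ} (A : Matrix (Fin n) (Fin n) K) : K :=
  ∑ σ ∈ Finset.univ.filter (fun σ : Equiv.Perm (Fin n) => Equiv.Perm.sign σ = -1),
    ∏ i, A i (σ i)

/-- The generalized determinant `det^{(α,β)}`. -/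
noncomputable def gdet {K : Type*} [Field K] {n : ℕ} (α β : K) (A : Matrix (Fin n) (Fin n) K) : K :=
  α * evenDet A + β * oddDet A

/-- The permutation matrix `P = (δ_{i, σ(j)})`. -/
def permMat (K : Type*) [Field K] {n : ℕ} (σ : Equiv.Perm (Fin n)) : Matrix (Fin n) (Fin n) K :=
  fun i j => if i = σ j then 1 else 0

set_option linter.unusedSectionVars false

namespace GdetAux

open Equiv Polynomial

variable {K : Type*} [Field K] {n : ℕ}

/-- weight of a permutation -/
noncomputable def w (α β : K) (π : Equiv.Perm (Fin n)) : K :=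
  if Equiv.Perm.sign π = 1 then α else β

lemma sign_ne_one_iff (π : Equiv.Perm (Fin n)) :
    ¬ (Equiv.Perm.sign π = 1) ↔ Equiv.Perm.sign π = -1 := by
  rcases Int.units_eq_one_or (Equiv.Perm.sign π) with h | h <;> simp [h]

lemma gdet_eq_sum (α β : K) (A : Matrix (Fin n) (Fin n) K) :
    gdet α β A = ∑ π : Equiv.Perm (Fin n), w α β π * ∏ i, A i (π i) := by
  classical
  rw [← Finset.sum_filter_add_sum_filter_not Finset.univ
    (fun π : Equiv.Perm (Fin n) => Equiv.Perm.sign π = 1)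
    (fun π => w α β π * ∏ i, A i (π i))]
  rw [gdet, evenDet, oddDet, Finset.mul_sum, Finset.mul_sum]
  congr 1
  · apply Finset.sum_congr rfl
    intro π hπ
    simp only [Finset.mem_filter] at hπ
    simp [w, hπ.2]
  · rw [show (Finset.univ.filter fun π : Equiv.Perm (Fin n) => ¬ Equiv.Perm.sign π = 1)
        = Finset.univ.filter (fun π => Equiv.Perm.sign π = -1) by
      apply Finset.filter_congr; intro π _; simp [sign_ne_one_iff]]
    apply Finset.sum_congr rfl
    intro π hπ
    simp only [Finset.mem_filter] at hπ
    have : ¬ (Equiv.Perm.sign π = 1) := (sign_ne_one_iff π).mpr hπ.2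
    simp [w, this]

lemma w_mul_swap (α β : K) (π : Equiv.Perm (Fin n)) {u v : Fin n} (huv : u ≠ v) :
    w α β (Equiv.swap u v * π) = if Equiv.Perm.sign π = 1 then β else α := by
  have hs : Equiv.Perm.sign (Equiv.swap u v * π) = - Equiv.Perm.sign π := by
    rw [_root_.map_mul, Equiv.Perm.sign_swap huv, neg_one_mul]
  rcases Int.units_eq_one_or (Equiv.Perm.sign π) with h | h
  · rw [w, hs, h]; norm_num
  · rw [w, hs, h]; norm_num

end GdetAux

namespace GdetAux2
open Equiv Polynomial GdetAux

variable {K : Type*} [Field K] {n : ℕ}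

/-- permutation with two prescribed values -/
lemma exists_perm_two {x y a b : Fin n} (hxy : x ≠ y) (hab : a ≠ b) :
    ∃ π : Equiv.Perm (Fin n), π x = a ∧ π y = b := by
  classical
  set ρ₁ := Equiv.swap x a with hρ₁
  set j' := ρ₁ y with hj'
  refine ⟨Equiv.swap j' b * ρ₁, ?_, ?_⟩
  · have h1 : ρ₁ x = a := Equiv.swap_apply_left x a
    have hj'a : j' ≠ a := by
      intro h
      exact hxy (ρ₁.injective (by rw [h1, ← h]))
    simp only [Equiv.Perm.mul_apply, h1]
    exact Equiv.swap_apply_of_ne_of_ne (Ne.symm hj'a) hab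
  · simp only [Equiv.Perm.mul_apply, ← hj']
    by_cases h : j' = b
    · rw [h, Equiv.swap_self]; rfl
    · exact Equiv.swap_apply_left j' b

/-- two distinct elements avoiding two given ones, for `4 ≤ n` -/
lemma exists_two_avoid (hn : 4 ≤ n) (x y : Fin n) :
    ∃ k l : Fin n, k ≠ l ∧ k ≠ x ∧ k ≠ y ∧ l ≠ x ∧ l ≠ y := by
  classical
  have hcard : 1 < (Finset.univ \ {x, y} : Finset (Fin n)).card := by
    have h1 : ({x, y} : Finset (Fin n)).card ≤ 2 :=
      (Finset.card_insert_le _ _).trans (by simp)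
    have h3 : (Finset.univ \ {x, y} : Finset (Fin n)).card
        = Fintype.card (Fin n) - ({x, y} : Finset (Fin n)).card := by
      rw [Finset.card_sdiff_of_subset (Finset.subset_univ _), Finset.card_univ]
    rw [h3, Fintype.card_fin]
    omega
  obtain ⟨k, hk, l, hl, hkl⟩ := Finset.one_lt_card.mp hcard
  simp only [Finset.mem_sdiff, Finset.mem_insert, Finset.mem_singleton] at hk hl
  exact ⟨k, l, hkl, by tauto, by tauto, by tauto, by tauto⟩

/-- permutation with two prescribed values and prescribed sign, for `4 ≤ n` -/
lemma exists_perm_two_sign (hn : 4 ≤ n) {x y a b : Fin n} (hxy : x ≠ y) (hab : a ≠ b)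
    (s : ℤˣ) : ∃ π : Equiv.Perm (Fin n), π x = a ∧ π y = b ∧ Equiv.Perm.sign π = s := by
  classical
  obtain ⟨π₀, h1, h2⟩ := exists_perm_two hxy hab
  obtain ⟨k, l, hkl, hkx, hky, hlx, hly⟩ := exists_two_avoid hn x y
  by_cases hs : Equiv.Perm.sign π₀ = s
  · exact ⟨π₀, h1, h2, hs⟩
  · have hsx : Equiv.swap k l x = x := Equiv.swap_apply_of_ne_of_ne (Ne.symm hkx) (Ne.symm hlx)
    have hsy : Equiv.swap k l y = y := Equiv.swap_apply_of_ne_of_ne (Ne.symm hky) (Ne.symm hly)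
    refine ⟨π₀ * Equiv.swap k l, ?_, ?_, ?_⟩
    · simp only [Equiv.Perm.mul_apply, hsx, h1]
    · simp only [Equiv.Perm.mul_apply, hsy, h2]
    · rw [_root_.map_mul, Equiv.Perm.sign_swap hkl]
      rcases Int.units_eq_one_or (Equiv.Perm.sign π₀) with h | h <;>
        rcases Int.units_eq_one_or s with h' | h' <;> simp_all

/-- a permutation agreeing with `π` off `{x, y}` is `π` or `swap (π x) (π y) * π`. -/
lemma perm_eq_or_swap {π π' : Equiv.Perm (Fin n)} {x y : Fin n} (hxy : x ≠ y)
    (h : ∀ k, k ≠ x → k ≠ y → π' k = π k) :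
    π' = π ∨ π' = Equiv.swap (π x) (π y) * π := by
  classical
  set e := π' * π⁻¹ with he
  have hfix : ∀ z, z ≠ π x → z ≠ π y → e z = z := by
    intro z hzx hzy
    have hk : π⁻¹ z ≠ x := by intro hh; apply hzx; rw [← hh]; simp
    have hk' : π⁻¹ z ≠ y := by intro hh; apply hzy; rw [← hh]; simp
    simp only [he, Equiv.Perm.mul_apply]
    rw [h _ hk hk']; simp
  have hpxy : π x ≠ π y := fun hh => hxy (π.injective hh)
  have key : e = 1 ∨ e = Equiv.swap (π x) (π y) := by
    by_cases hex : e (π x) = π x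
    · left
      have hey : e (π y) = π y := by
        rcases eq_or_ne (e (π y)) (π y) with h2 | h2
        · exact h2
        rcases eq_or_ne (e (π y)) (π x) with h1 | h1
        · exact absurd (e.injective (hex.trans h1.symm)) hpxy
        · exact e.injective (hfix _ h1 h2)
      apply Equiv.ext; intro z
      rcases eq_or_ne z (π x) with rfl | h1
      · rw [hex]; rfl
      rcases eq_or_ne z (π y) with rfl | h2
      · rw [hey]; rfl
      · rw [hfix z h1 h2]; rfl
    · have hexy : e (π x) = π y := by
        rcases eq_or_ne (e (π x)) (π y) with h1 | h1
        · exact h1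
        · exact absurd (e.injective (hfix _ hex h1)) hex
      right
      have heyx : e (π y) = π x := by
        rcases eq_or_ne (e (π y)) (π x) with h1 | h1
        · exact h1
        rcases eq_or_ne (e (π y)) (π y) with h2 | h2
        · exact absurd (e.injective (hexy.trans h2.symm)) hpxy
        · exact absurd (e.injective (hfix _ h1 h2)) h2
      apply Equiv.ext; intro z
      rcases eq_or_ne z (π x) with rfl | h1
      · rw [hexy, Equiv.swap_apply_left]
      rcases eq_or_ne z (π y) with rfl | h2
      · rw [heyx, Equiv.swap_apply_right]
      · rw [hfix z h1 h2, Equiv.swap_apply_of_ne_of_ne h1 h2]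
  rcases key with h1 | h1
  · left
    have h2 : π' * π⁻¹ = 1 := h1
    calc π' = (π' * π⁻¹) * π := by group
    _ = π := by rw [h2]; group
  · right
    have h2 : π' * π⁻¹ = Equiv.swap (π x) (π y) := h1
    calc π' = (π' * π⁻¹) * π := by group
    _ = Equiv.swap (π x) (π y) * π := by rw [h2]

end GdetAux2

namespace GdetAux3
open Equiv Polynomial GdetAux GdetAux2

variable {K : Type*} [Field K] {n : ℕ}

/-- flat matrices: second difference of gdet vanishes -/
def Flat (α β : K) (X : Matrix (Fin n) (Fin n) K) : Prop :=
  ∀ (A : Matrix (Fin n) (Fin n) K) (t : K),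
    gdet α β (A + t • X) + gdet α β (A - t • X) = 2 * gdet α β A

def IsRow (X : Matrix (Fin n) (Fin n) K) (r : Fin n) : Prop := ∀ k l, k ≠ r → X k l = 0
def IsCol (X : Matrix (Fin n) (Fin n) K) (c : Fin n) : Prop := ∀ k l, l ≠ c → X k l = 0

def IsLine (X : Matrix (Fin n) (Fin n) K) : Prop := (∃ r, IsRow X r) ∨ (∃ c, IsCol X c)

lemma flat_of_line {α β : K} {X : Matrix (Fin n) (Fin n) K} (h : IsLine X) : Flat α β X := by
  intro A t
  simp only [gdet_eq_sum]
  rw [← Finset.sum_add_distrib, Finset.mul_sum]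
  apply Finset.sum_congr rfl
  intro π _
  have key : ∏ i, (A + t • X) i (π i) + ∏ i, (A - t • X) i (π i) = 2 * ∏ i, A i (π i) := by
    rcases h with ⟨r, hr⟩ | ⟨c, hc⟩
    · have h1 : ∀ (c' : K), ∏ i, (A i (π i) + c' * X i (π i))
          = (A r (π r) + c' * X r (π r)) * ∏ i ∈ Finset.univ.erase r, A i (π i) := by
        intro c'
        rw [← Finset.mul_prod_erase Finset.univ _ (Finset.mem_univ r)]
        congr 1
        apply Finset.prod_congr rfl
        intro i hi
        rw [hr i (π i) (Finset.mem_erase.mp hi).1, mul_zero, add_zero]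
      have e1 : ∏ i, (A + t • X) i (π i) = ∏ i, (A i (π i) + t * X i (π i)) := by
        apply Finset.prod_congr rfl; intro i _; simp [Matrix.add_apply, Matrix.smul_apply]
      have e2 : ∏ i, (A - t • X) i (π i) = ∏ i, (A i (π i) + (-t) * X i (π i)) := by
        apply Finset.prod_congr rfl; intro i _
        simp [Matrix.sub_apply, Matrix.smul_apply]; ring
      rw [e1, e2, h1 t, h1 (-t),
        show (∏ i, A i (π i)) = A r (π r) * ∏ i ∈ Finset.univ.erase r, A i (π i) from
          (Finset.mul_prod_erase Finset.univ (fun i => A i (π i)) (Finset.mem_univ r)).symm]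
      ring
    · have hrc : ∀ i, i ≠ π.symm c → X i (π i) = 0 := by
        intro i hi
        apply hc
        intro hh
        exact hi (by rw [← hh]; simp)
      have h1 : ∀ (c' : K), ∏ i, (A i (π i) + c' * X i (π i))
          = (A (π.symm c) (π (π.symm c)) + c' * X (π.symm c) (π (π.symm c)))
            * ∏ i ∈ Finset.univ.erase (π.symm c), A i (π i) := by
        intro c'
        rw [← Finset.mul_prod_erase Finset.univ _ (Finset.mem_univ (π.symm c))]
        congr 1
        apply Finset.prod_congr rfl
        intro i hi
        rw [hrc i (Finset.mem_erase.mp hi).1, mul_zero, add_zero]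
      have e1 : ∏ i, (A + t • X) i (π i) = ∏ i, (A i (π i) + t * X i (π i)) := by
        apply Finset.prod_congr rfl; intro i _; simp [Matrix.add_apply, Matrix.smul_apply]
      have e2 : ∏ i, (A - t • X) i (π i) = ∏ i, (A i (π i) + (-t) * X i (π i)) := by
        apply Finset.prod_congr rfl; intro i _
        simp [Matrix.sub_apply, Matrix.smul_apply]; ring
      rw [e1, e2, h1 t, h1 (-t),
        show (∏ i, A i (π i)) = A (π.symm c) (π (π.symm c))
            * ∏ i ∈ Finset.univ.erase (π.symm c), A i (π i) from
          (Finset.mul_prod_erase Finset.univ (fun i => A i (π i))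
            (Finset.mem_univ (π.symm c))).symm]
      ring
  rw [← mul_add, key]; ring

lemma line_of_pairwise (hn : 4 ≤ n) {X : Matrix (Fin n) (Fin n) K}
    (h : ∀ i j u v, i ≠ j → u ≠ v → X i u * X j v = 0) : IsLine X := by
  classical
  by_cases hX : ∀ k l, X k l = 0
  · exact Or.inl ⟨⟨0, by omega⟩, fun k l _ => hX k l⟩
  push_neg at hX
  obtain ⟨i₀, u₀, h₀⟩ := hX
  by_cases hrow : ∀ k l, X k l ≠ 0 → k = i₀
  · left
    exact ⟨i₀, fun k l hk => by
      by_contra hne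
      exact hk (hrow k l hne)⟩
  · push_neg at hrow
    obtain ⟨k₁, l₁, hk₁, hk₁i₀⟩ := hrow
    have hl₁ : l₁ = u₀ := by
      by_contra hne
      have := h i₀ k₁ u₀ l₁ (Ne.symm hk₁i₀) (Ne.symm hne)
      rcases mul_eq_zero.mp this with h' | h'
      · exact h₀ h'
      · exact hk₁ h'
    right
    refine ⟨u₀, fun k l hl => ?_⟩
    by_contra hkl
    have hki₀ : k = i₀ := by
      by_contra hne
      rcases mul_eq_zero.mp (h k i₀ l u₀ hne hl) with h' | h'
      · exact hkl h'
      · exact h₀ h'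
    have hkk₁ : k = k₁ := by
      by_contra hne
      have hXk₁u₀ : X k₁ u₀ ≠ 0 := by rw [← hl₁]; exact hk₁
      rcases mul_eq_zero.mp (h k k₁ l u₀ hne hl) with h' | h'
      · exact hkl h'
      · exact hXk₁u₀ h'
    exact hk₁i₀ (hkk₁ ▸ hki₀)

def rowSub (K : Type*) [Field K] {n : ℕ} (r : Fin n) :
    Submodule K (Matrix (Fin n) (Fin n) K) where
  carrier := {X | IsRow X r}
  add_mem' := fun {a b} ha hb k l hk => by
    simp [Matrix.add_apply, ha k l hk, hb k l hk]
  zero_mem' := fun k l _ => rfl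
  smul_mem' := fun c {X} hX k l hk => by simp [Matrix.smul_apply, hX k l hk]

def colSub (K : Type*) [Field K] {n : ℕ} (c : Fin n) :
    Submodule K (Matrix (Fin n) (Fin n) K) where
  carrier := {X | IsCol X c}
  add_mem' := fun {a b} ha hb k l hl => by
    simp [Matrix.add_apply, ha k l hl, hb k l hl]
  zero_mem' := fun k l _ => rfl
  smul_mem' := fun c' {X} hX k l hl => by simp [Matrix.smul_apply, hX k l hl]

lemma mem_rowSub {r : Fin n} {X : Matrix (Fin n) (Fin n) K} :
    X ∈ rowSub K r ↔ IsRow X r := Iff.rfl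

lemma mem_colSub {c : Fin n} {X : Matrix (Fin n) (Fin n) K} :
    X ∈ colSub K c ↔ IsCol X c := Iff.rfl

/-- the elementary cell matrix -/
def cell (K : Type*) [Field K] {n : ℕ} (i j : Fin n) : Matrix (Fin n) (Fin n) K :=
  fun k l => if k = i ∧ l = j then 1 else 0

lemma cell_mem_rowSub (i j : Fin n) : cell K i j ∈ rowSub K i := by
  intro k l hk
  simp [cell, hk]

lemma cell_mem_colSub (i j : Fin n) : cell K i j ∈ colSub K j := by
  intro k l hl
  simp [cell, hl]

lemma matrix_eq_sum_cells (A : Matrix (Fin n) (Fin n) K) :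
    A = ∑ i, ∑ j, A i j • cell K i j := by
  funext k l
  have inner : ∀ i, (∑ j, A i j • cell K i j) k l = if k = i then A i l else 0 := by
    intro i
    have : ∀ j, (A i j • cell K i j) k l = if j = l then (if k = i then A i l else 0) else 0 := by
      intro j
      by_cases hj : j = l
      · subst hj
        by_cases hk : k = i <;> simp [cell, Matrix.smul_apply, hk]
      · have hl : ¬(l = j) := fun h => hj h.symm
        simp [cell, Matrix.smul_apply, hl, hj]
    rw [show ((∑ j, A i j • cell K i j) k l) = ∑ j, (A i j • cell K i j) k l by
      simp [Matrix.sum_apply]]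
    rw [Finset.sum_congr rfl (fun j _ => this j), Finset.sum_ite_eq' Finset.univ l
      (fun _ => if k = i then A i l else 0)]
    simp
  rw [show ((∑ i, ∑ j, A i j • cell K i j) k l) = ∑ i, (∑ j, A i j • cell K i j) k l by
    simp [Matrix.sum_apply]]
  rw [Finset.sum_congr rfl (fun i _ => inner i), Finset.sum_ite_eq Finset.univ k
    (fun i => A i l)]
  simp

lemma gdet_permlike (α β : K) (π₁ : Equiv.Perm (Fin n)) (val : Fin n → K) :
    gdet α β (Matrix.of fun k l => if l = π₁ k then val k else 0)
      = w α β π₁ * ∏ k, val k := by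
  classical
  rw [gdet_eq_sum]
  rw [Finset.sum_eq_single π₁]
  · congr 1
    apply Finset.prod_congr rfl
    intro k _
    simp [Matrix.of_apply]
  · intro π' _ hπ'
    have : ∃ k, π' k ≠ π₁ k := by
      by_contra hh
      push_neg at hh
      exact hπ' (Equiv.ext hh)
    obtain ⟨k, hk⟩ := this
    have hz : Matrix.of (fun k l => if l = π₁ k then val k else 0) k (π' k) = 0 := by
      simp [Matrix.of_apply, hk]
    rw [Finset.prod_eq_zero (Finset.mem_univ k) hz, mul_zero]
  · intro hh
    exact absurd (Finset.mem_univ π₁) hh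

end GdetAux3

namespace GdetAux4
open Equiv Polynomial GdetAux GdetAux2 GdetAux3

variable {K : Type*} [Field K] {n : ℕ}

/-- the partial permutation matrix with rows `x, y` deleted -/
def Amat (K : Type*) [Field K] {n : ℕ} (π : Equiv.Perm (Fin n)) (x y : Fin n) :
    Matrix (Fin n) (Fin n) K :=
  Matrix.of fun k l => if k ≠ x ∧ k ≠ y ∧ l = π k then (1 : K) else 0

lemma eval_sum_poly (α β : K) (A Y : Matrix (Fin n) (Fin n) K) (t : K) :
    Polynomial.eval t (∑ π' : Equiv.Perm (Fin n), Polynomial.C (w α β π') *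
      ∏ k, (Polynomial.C (A k (π' k)) + Polynomial.C (Y k (π' k)) * Polynomial.X))
    = gdet α β (A + t • Y) := by
  rw [gdet_eq_sum, Polynomial.eval_finset_sum]
  apply Finset.sum_congr rfl
  intro π' _
  rw [Polynomial.eval_mul, Polynomial.eval_C, Polynomial.eval_prod]
  congr 1
  apply Finset.prod_congr rfl
  intro k _
  simp only [Polynomial.eval_add, Polynomial.eval_mul, Polynomial.eval_C, Polynomial.eval_X,
    Matrix.add_apply, Matrix.smul_apply, smul_eq_mul]
  ring

lemma coeff2_aux (α β : K) (π : Equiv.Perm (Fin n)) {x y : Fin n} (hxy : x ≠ y)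
    (Y : Matrix (Fin n) (Fin n) K) :
    (∑ π' : Equiv.Perm (Fin n), Polynomial.C (w α β π') *
      ∏ k, (Polynomial.C (Amat K π x y k (π' k)) + Polynomial.C (Y k (π' k)) * Polynomial.X)).coeff 2
    = w α β π * (Y x (π x) * Y y (π y))
      + w α β (Equiv.swap (π x) (π y) * π) * (Y x (π y) * Y y (π x)) := by
  classical
  set πs := Equiv.swap (π x) (π y) * π with hπs
  have hπxy : π x ≠ π y := fun h => hxy (π.injective h)
  have hne : π ≠ πs := by
    intro h
    have hx' : π x = πs x := congrArg (fun p : Equiv.Perm (Fin n) => p x) h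
    rw [hπs] at hx'
    simp only [Equiv.Perm.mul_apply, Equiv.swap_apply_left] at hx'
    exact hπxy hx'
  have hπsx : πs x = π y := by rw [hπs]; simp [Equiv.Perm.mul_apply]
  have hπsy : πs y = π x := by rw [hπs]; simp [Equiv.Perm.mul_apply]
  set t₀ : Finset (Fin n) := ({x, y} : Finset (Fin n))ᶜ with ht₀
  have ht₀c : t₀ᶜ = ({x, y} : Finset (Fin n)) := by rw [ht₀, compl_compl]
  have hcard2 : ({x, y} : Finset (Fin n)).card = 2 := Finset.card_pair hxy
  have main : ∀ π' : Equiv.Perm (Fin n),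
      (Polynomial.C (w α β π') *
        ∏ k, (Polynomial.C (Amat K π x y k (π' k))
          + Polynomial.C (Y k (π' k)) * Polynomial.X)).coeff 2
      = (if π' = π then w α β π * (Y x (π x) * Y y (π y)) else 0)
        + (if π' = πs then w α β πs * (Y x (π y) * Y y (π x)) else 0) := by
    intro π'
    rw [Polynomial.coeff_C_mul]
    rw [Fintype.prod_add (fun k => Polynomial.C (Amat K π x y k (π' k)))
      (fun k => Polynomial.C (Y k (π' k)) * Polynomial.X)]
    have expand : ∀ t : Finset (Fin n),
        (∏ k ∈ t, Polynomial.C (Amat K π x y k (π' k))) *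
          ∏ k ∈ tᶜ, (Polynomial.C (Y k (π' k)) * Polynomial.X)
        = Polynomial.C ((∏ k ∈ t, Amat K π x y k (π' k)) * ∏ k ∈ tᶜ, Y k (π' k))
            * Polynomial.X ^ tᶜ.card := by
      intro t
      rw [Finset.prod_mul_distrib, Finset.prod_const,
        ← _root_.map_prod Polynomial.C (fun k => Amat K π x y k (π' k)) t,
        ← _root_.map_prod Polynomial.C (fun k => Y k (π' k)) tᶜ]
      rw [_root_.map_mul Polynomial.C]
      ring
    rw [Finset.sum_congr rfl (fun t _ => expand t), Polynomial.finset_sum_coeff]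
    have coeff_term : ∀ t : Finset (Fin n),
        (Polynomial.C ((∏ k ∈ t, Amat K π x y k (π' k)) * ∏ k ∈ tᶜ, Y k (π' k))
          * Polynomial.X ^ tᶜ.card).coeff 2
        = if 2 = tᶜ.card
            then (∏ k ∈ t, Amat K π x y k (π' k)) * ∏ k ∈ tᶜ, Y k (π' k) else 0 := by
      intro t
      rw [Polynomial.coeff_C_mul, Polynomial.coeff_X_pow]
      by_cases h : 2 = tᶜ.card <;> simp [h]
    rw [Finset.sum_congr rfl (fun t _ => coeff_term t)]
    -- now a sum over subsets with a single surviving term t₀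
    rw [Finset.sum_eq_single t₀]
    · -- value at t₀
      by_cases hagree : ∀ k, k ≠ x → k ≠ y → π' k = π k
      · have hA1 : ∏ k ∈ t₀, Amat K π x y k (π' k) = 1 := by
          apply Finset.prod_eq_one
          intro k hk
          rw [ht₀, Finset.mem_compl, Finset.mem_insert, Finset.mem_singleton] at hk
          push_neg at hk
          simp [Amat, hk.1, hk.2, hagree k hk.1 hk.2]
        rcases perm_eq_or_swap hxy hagree with rfl | h1
        · rw [if_pos rfl, if_neg hne, ht₀c, hcard2, if_pos rfl, hA1, one_mul,
            Finset.prod_pair hxy, add_zero]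
        · have h1' : π' = πs := by rw [h1, hπs]
          have hA1' : (∏ k ∈ t₀, Amat K π x y k (πs k)) = 1 := by rw [← h1']; exact hA1
          have hprod : ∏ k ∈ ({x, y} : Finset (Fin n)), Y k (πs k)
              = Y x (π y) * Y y (π x) := by
            rw [Finset.prod_pair hxy, hπsx, hπsy]
          rw [h1', if_neg (Ne.symm hne), if_pos rfl, ht₀c, hcard2, if_pos rfl, hA1', hprod,
            one_mul, zero_add]
      · push_neg at hagree
        obtain ⟨k, hkx, hky, hk⟩ := hagree
        have hA0 : ∏ k ∈ t₀, Amat K π x y k (π' k) = 0 := by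
          apply Finset.prod_eq_zero (i := k)
          · rw [ht₀, Finset.mem_compl, Finset.mem_insert, Finset.mem_singleton]
            push_neg
            exact ⟨hkx, hky⟩
          · simp [Amat, hk]
        have hπ'π : π' ≠ π := fun h => hk (by rw [h])
        have hπ'πs : π' ≠ πs := by
          intro h
          apply hk
          rw [h, hπs]
          simp only [Equiv.Perm.mul_apply]
          exact Equiv.swap_apply_of_ne_of_ne
            (fun hh => hkx (π.injective hh)) (fun hh => hky (π.injective hh))
        rw [if_neg hπ'π, if_neg hπ'πs, ht₀c, hcard2, if_pos rfl, hA0, zero_mul, add_zero, mul_zero]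
    · -- other subsets contribute 0
      intro t _ hne'
      by_cases h2 : 2 = tᶜ.card
      · rw [if_pos h2]
        by_cases hz : ∏ k ∈ t, Amat K π x y k (π' k) = 0
        · rw [hz, zero_mul]
        · exfalso
          have hsub : t ⊆ t₀ := by
            intro k hk
            have := Finset.prod_ne_zero_iff.mp hz k hk
            rw [ht₀, Finset.mem_compl, Finset.mem_insert, Finset.mem_singleton]
            push_neg
            by_contra hcon
            apply this
            simp only [Amat, Matrix.of_apply, ite_eq_right_iff]
            intro ⟨h1', h2', _⟩
            exact absurd (by tauto) hcon
          have hcards : t.card = t₀.card := by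
            have e1 : t.card + tᶜ.card = n := by
              rw [Finset.card_add_card_compl, Fintype.card_fin]
            have e2 : t₀.card + t₀ᶜ.card = n := by
              rw [Finset.card_add_card_compl, Fintype.card_fin]
            rw [ht₀c, hcard2] at e2
            omega
          exact hne' (Finset.eq_of_subset_of_card_le hsub (le_of_eq hcards.symm))
      · rw [if_neg h2]
    · intro h
      exact absurd (Finset.mem_univ t₀) h
  rw [Polynomial.finset_sum_coeff, Finset.sum_congr rfl (fun π' _ => main π'),
    Finset.sum_add_distrib, Finset.sum_ite_eq' Finset.univ π
      (fun _ => w α β π * (Y x (π x) * Y y (π y))),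
    Finset.sum_ite_eq' Finset.univ πs (fun _ => w α β πs * (Y x (π y) * Y y (π x)))]
  simp

end GdetAux4

namespace GdetAux5
open Equiv Polynomial GdetAux GdetAux2 GdetAux3 GdetAux4

variable {K : Type*} [Field K] {n : ℕ}

lemma flat_c2 [CharZero K] (α β : K) {X : Matrix (Fin n) (Fin n) K} (hX : Flat α β X)
    (π : Equiv.Perm (Fin n)) {x y : Fin n} (hxy : x ≠ y) :
    w α β π * (X x (π x) * X y (π y))
      + w α β (Equiv.swap (π x) (π y) * π) * (X x (π y) * X y (π x)) = 0 := by
  classical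
  have hPQ :
      (∑ π' : Equiv.Perm (Fin n), Polynomial.C (w α β π') *
        ∏ k, (Polynomial.C (Amat K π x y k (π' k)) + Polynomial.C (X k (π' k)) * Polynomial.X))
      + (∑ π' : Equiv.Perm (Fin n), Polynomial.C (w α β π') *
        ∏ k, (Polynomial.C (Amat K π x y k (π' k)) + Polynomial.C ((-X) k (π' k)) * Polynomial.X))
      = Polynomial.C (2 * gdet α β (Amat K π x y)) := by
    apply Polynomial.funext
    intro t
    rw [Polynomial.eval_add, eval_sum_poly, eval_sum_poly, Polynomial.eval_C]
    have hm : Amat K π x y + t • (-X) = Amat K π x y - t • X := by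
      rw [smul_neg, ← sub_eq_add_neg]
    rw [hm]
    exact hX (Amat K π x y) t
  have h2 := congrArg (fun p : Polynomial K => p.coeff 2) hPQ
  simp only [Polynomial.coeff_add] at h2
  rw [coeff2_aux α β π hxy X, coeff2_aux α β π hxy (-X)] at h2
  have hC : (Polynomial.C (2 * gdet α β (Amat K π x y))).coeff 2 = 0 := by
    rw [Polynomial.coeff_C]; simp
  rw [hC] at h2
  simp only [Matrix.neg_apply, neg_mul_neg] at h2
  set E := w α β π * (X x (π x) * X y (π y))
    + w α β (Equiv.swap (π x) (π y) * π) * (X x (π y) * X y (π x)) with hE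
  have h2E : (2 : K) * E = 0 := by rw [hE]; linear_combination h2
  rcases mul_eq_zero.mp h2E with h | h
  · exact absurd h two_ne_zero
  · exact h

lemma flat_pair [CharZero K] (hn : 4 ≤ n) {α β : K} (hαβ : α ≠ β) (hαβ' : α ≠ -β)
    {X : Matrix (Fin n) (Fin n) K} (hX : Flat α β X) :
    ∀ x y u v, x ≠ y → u ≠ v → X x u * X y v = 0 := by
  intro x y u v hxy huv
  obtain ⟨π₁, hπ₁x, hπ₁y, hπ₁s⟩ := exists_perm_two_sign hn hxy huv 1
  obtain ⟨π₂, hπ₂x, hπ₂y, hπ₂s⟩ := exists_perm_two_sign hn hxy huv (-1)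
  have e1 := flat_c2 α β hX π₁ hxy
  have e2 := flat_c2 α β hX π₂ hxy
  rw [hπ₁x, hπ₁y] at e1
  rw [hπ₂x, hπ₂y] at e2
  have w1 : w α β π₁ = α := by rw [w, if_pos hπ₁s]
  have w1s : w α β (Equiv.swap u v * π₁) = β := by rw [w_mul_swap α β π₁ huv, if_pos hπ₁s]
  have hs2 : ¬ (Equiv.Perm.sign π₂ = 1) := by rw [hπ₂s]; decide
  have w2 : w α β π₂ = β := by rw [w, if_neg hs2]
  have w2s : w α β (Equiv.swap u v * π₂) = α := by rw [w_mul_swap α β π₂ huv, if_neg hs2]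
  rw [w1, w1s] at e1
  rw [w2, w2s] at e2
  set S := X x u * X y v with hS
  set Tm := X x v * X y u with hT
  have hab1 : α + β ≠ 0 := fun h => hαβ' (eq_neg_of_add_eq_zero_left h)
  have hab2 : α - β ≠ 0 := sub_ne_zero.mpr hαβ
  have hsum : (α + β) * (S + Tm) = 0 := by linear_combination e1 + e2
  have hdiff : (α - β) * (S - Tm) = 0 := by linear_combination e1 - e2
  have hST : S + Tm = 0 := (mul_eq_zero.mp hsum).resolve_left hab1
  have hST' : S - Tm = 0 := (mul_eq_zero.mp hdiff).resolve_left hab2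
  have h2S : (2 : K) * S = 0 := by linear_combination hST + hST'
  rcases mul_eq_zero.mp h2S with h | h
  · exact absurd h two_ne_zero
  · exact h

lemma line_of_flat [CharZero K] (hn : 4 ≤ n) {α β : K} (hαβ : α ≠ β) (hαβ' : α ≠ -β)
    {X : Matrix (Fin n) (Fin n) K} (hX : Flat α β X) : IsLine X :=
  line_of_pairwise hn (fun i j u v hij huv => flat_pair hn hαβ hαβ' hX i j u v hij huv)

end GdetAux5

namespace GdetAux6
open Equiv GdetAux GdetAux2 GdetAux3

variable {K : Type*} [Field K] {n : ℕ}

lemma subspace_in_union_fin {V : Type*} [AddCommGroup V] [Module K V] [Infinite K] :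
    ∀ (m : ℕ) (Ws : Fin m → Submodule K V) (p : Submodule K V),
      (∀ v ∈ p, ∃ k, v ∈ Ws k) → ∃ k, p ≤ Ws k := by
  intro m
  induction m with
  | zero => intro Ws p h; exact absurd (h 0 p.zero_mem) (by simp)
  | succ m IH =>
    intro Ws p h
    by_cases hcase : ∀ v ∈ p, ∃ k : Fin m, v ∈ Ws k.castSucc
    · obtain ⟨k, hk⟩ := IH (fun k => Ws k.castSucc) p hcase
      exact ⟨k.castSucc, hk⟩
    · push_neg at hcase
      obtain ⟨x, hxp, hx⟩ := hcase
      refine ⟨Fin.last m, fun y hy => ?_⟩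
      have hch : ∀ c : K, ∃ k, y + c • x ∈ Ws k := fun c =>
        h _ (p.add_mem hy (p.smul_mem c hxp))
      choose g hg using hch
      obtain ⟨c₁, c₂, hcc, hgc⟩ := Finite.exists_ne_map_eq_of_infinite g
      have hxW : x ∈ Ws (g c₁) := by
        have h1 := hg c₁
        have h2 := hg c₂
        rw [← hgc] at h2
        have h3 : (c₁ - c₂) • x ∈ Ws (g c₁) := by
          have h4 := Submodule.sub_mem _ h1 h2
          have h5 : (y + c₁ • x) - (y + c₂ • x) = (c₁ - c₂) • x := by
            rw [sub_smul]; abel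
          rwa [h5] at h4
        have hne0 : c₁ - c₂ ≠ 0 := sub_ne_zero.mpr hcc
        have h6 := Submodule.smul_mem _ (c₁ - c₂)⁻¹ h3
        rwa [smul_smul, inv_mul_cancel₀ hne0, one_smul] at h6
      have hglast : g c₁ = Fin.last m := by
        rcases Fin.eq_castSucc_or_eq_last (g c₁) with ⟨k, hk⟩ | hk
        · exact absurd (hk ▸ hxW) (hx k)
        · exact hk
      have h1 := hg c₁
      rw [hglast] at hxW h1
      have h7 := Submodule.sub_mem _ h1 (Submodule.smul_mem _ c₁ hxW)
      simpa using h7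

lemma subspace_in_union {V : Type*} [AddCommGroup V] [Module K V] [Infinite K]
    {ι : Type*} [Fintype ι] (Ws : ι → Submodule K V) (p : Submodule K V)
    (h : ∀ v ∈ p, ∃ k, v ∈ Ws k) : ∃ k, p ≤ Ws k := by
  classical
  obtain ⟨e⟩ : Nonempty (ι ≃ Fin (Fintype.card ι)) := ⟨Fintype.equivFin ι⟩
  obtain ⟨k, hk⟩ := subspace_in_union_fin (Fintype.card ι) (fun k => Ws (e.symm k)) p
    (fun v hv => by obtain ⟨k, hk⟩ := h v hv; exact ⟨e k, by simp [hk]⟩)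
  exact ⟨e.symm k, hk⟩

/-- predicate: `W` is a line subspace -/
def LineSub (W : Submodule K (Matrix (Fin n) (Fin n) K)) : Prop :=
  (∃ r, W = rowSub K r) ∨ (∃ c, W = colSub K c)

lemma line_sub_of_forall_line [Infinite K] (p : Submodule K (Matrix (Fin n) (Fin n) K))
    (h : ∀ X ∈ p, IsLine X) : ∃ W, LineSub W ∧ p ≤ W := by
  classical
  obtain ⟨k, hk⟩ := subspace_in_union
    (Sum.elim (fun r => rowSub K r) (fun c => colSub K c) : Fin n ⊕ Fin n → _) p
    (fun v hv => by
      rcases h v hv with ⟨r, hr⟩ | ⟨c, hc⟩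
      · exact ⟨Sum.inl r, hr⟩
      · exact ⟨Sum.inr c, hc⟩)
  rcases k with r | c
  · exact ⟨rowSub K r, Or.inl ⟨r, rfl⟩, hk⟩
  · exact ⟨colSub K c, Or.inr ⟨c, rfl⟩, hk⟩

lemma cell_apply_same (i j : Fin n) : cell K i j i j = 1 := by simp [cell]

lemma rowSub_le_rowSub {r a : Fin n} (hn : 4 ≤ n) (h : rowSub K r ≤ rowSub K a) : r = a := by
  by_contra hra
  have h1 := h (cell_mem_rowSub (K := K) r r) r r hra
  rw [cell_apply_same] at h1
  exact one_ne_zero h1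

lemma rowSub_not_le_colSub {r c : Fin n} (hn : 4 ≤ n) : ¬ (rowSub K r ≤ colSub K c) := by
  intro h
  have hcc : ∃ c' : Fin n, c' ≠ c := by
    rcases eq_or_ne c ⟨0, by omega⟩ with rfl | hc
    · exact ⟨⟨1, by omega⟩, by simp [Fin.ext_iff]⟩
    · exact ⟨⟨0, by omega⟩, fun hh => hc (by rw [← hh])⟩
  obtain ⟨c', hc'⟩ := hcc
  have h1 := h (cell_mem_rowSub (K := K) r c') r c' hc'
  rw [cell_apply_same] at h1
  exact one_ne_zero h1

lemma colSub_le_colSub {c b : Fin n} (hn : 4 ≤ n) (h : colSub K c ≤ colSub K b) : c = b := by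
  by_contra hcb
  have h1 := h (cell_mem_colSub (K := K) c c) c c hcb
  rw [cell_apply_same] at h1
  exact one_ne_zero h1

lemma colSub_not_le_rowSub {c r : Fin n} (hn : 4 ≤ n) : ¬ (colSub K c ≤ rowSub K r) := by
  intro h
  have hrr : ∃ r' : Fin n, r' ≠ r := by
    rcases eq_or_ne r ⟨0, by omega⟩ with rfl | hr
    · exact ⟨⟨1, by omega⟩, by simp [Fin.ext_iff]⟩
    · exact ⟨⟨0, by omega⟩, fun hh => hr (by rw [← hh])⟩
  obtain ⟨r', hr'⟩ := hrr
  have h1 := h (cell_mem_colSub (K := K) r' c) r' c hr'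
  rw [cell_apply_same] at h1
  exact one_ne_zero h1

end GdetAux6

namespace GdetAux7
open Equiv GdetAux GdetAux2 GdetAux3 GdetAux5 GdetAux6

variable {K : Type*} [Field K] {n : ℕ}

lemma structure_cases [CharZero K] (hn : 4 ≤ n) {α β : K} (hαβ : α ≠ β) (hαβ' : α ≠ -β)
    (T : Matrix (Fin n) (Fin n) K ≃ₗ[K] Matrix (Fin n) (Fin n) K)
    (hT : ∀ A, gdet α β (T A) = gdet α β A) :
    (∃ ρ κ : Equiv.Perm (Fin n), ∀ i j,
      T (cell K i j) = (T (cell K i j) (ρ i) (κ j)) • cell K (ρ i) (κ j)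
        ∧ T (cell K i j) (ρ i) (κ j) ≠ 0)
    ∨ (∃ ν μ : Equiv.Perm (Fin n), ∀ i j,
      T (cell K i j) = (T (cell K i j) (ν j) (μ i)) • cell K (ν j) (μ i)
        ∧ T (cell K i j) (ν j) (μ i) ≠ 0) := by
  classical
  have hd' : ∀ A, gdet α β (T.symm A) = gdet α β A := by
    intro A
    have h1 := hT (T.symm A)
    rw [T.apply_symm_apply] at h1
    exact h1.symm
  have flatT : ∀ X, Flat α β X → Flat α β (T X) := by
    intro X hX A t
    have e1 : A + t • T X = T (T.symm A + t • X) := by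
      rw [map_add, _root_.map_smul, T.apply_symm_apply]
    have e2 : A - t • T X = T (T.symm A - t • X) := by
      rw [map_sub, _root_.map_smul, T.apply_symm_apply]
    rw [e1, e2, hT, hT, hX (T.symm A) t, hd']
  have flatTsymm : ∀ X, Flat α β X → Flat α β (T.symm X) := by
    intro X hX A t
    have e1 : A + t • T.symm X = T.symm (T A + t • X) := by
      rw [map_add, _root_.map_smul, T.symm_apply_apply]
    have e2 : A - t • T.symm X = T.symm (T A - t • X) := by
      rw [map_sub, _root_.map_smul, T.symm_apply_apply]
    rw [e1, e2, hd', hd', hX (T A) t, hT]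
  have lineT : ∀ X, IsLine X → IsLine (T X) := fun X h =>
    line_of_flat hn hαβ hαβ' (flatT X (flat_of_line h))
  have lineTsymm : ∀ X, IsLine X → IsLine (T.symm X) := fun X h =>
    line_of_flat hn hαβ hαβ' (flatTsymm X (flat_of_line h))
  -- row spaces map onto line subspaces
  have hrowmap : ∀ r, ∃ W, LineSub W ∧ Submodule.map T.toLinearMap (rowSub K r) = W := by
    intro r
    have h1 : ∀ X ∈ Submodule.map T.toLinearMap (rowSub K r), IsLine X := by
      rintro X ⟨x, hx, rfl⟩
      exact lineT x (Or.inl ⟨r, hx⟩)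
    obtain ⟨W, hW, hle⟩ := line_sub_of_forall_line _ h1
    have h2 : ∀ X ∈ Submodule.map T.symm.toLinearMap W, IsLine X := by
      rintro X ⟨x, hx, rfl⟩
      apply lineTsymm
      rcases hW with ⟨a, rfl⟩ | ⟨c, rfl⟩
      · exact Or.inl ⟨a, hx⟩
      · exact Or.inr ⟨c, hx⟩
    obtain ⟨Z, hZ, hle2⟩ := line_sub_of_forall_line _ h2
    have hRZ : rowSub K r ≤ Z := by
      intro X hX
      have h3 : T.symm (T X) = X := T.symm_apply_apply X
      have h4 : T X ∈ W := hle ⟨X, hX, rfl⟩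
      have h5 : T.symm (T X) ∈ Submodule.map T.symm.toLinearMap W := ⟨T X, h4, rfl⟩
      rw [h3] at h5
      exact hle2 h5
    have hZeq : Z = rowSub K r := by
      rcases hZ with ⟨a, rfl⟩ | ⟨c, rfl⟩
      · rw [rowSub_le_rowSub hn hRZ]
      · exact absurd hRZ (rowSub_not_le_colSub hn)
    refine ⟨W, hW, le_antisymm hle ?_⟩
    intro wv hwv
    have h3 : T.symm wv ∈ rowSub K r := by
      rw [← hZeq]
      exact hle2 ⟨wv, hwv, rfl⟩
    exact ⟨T.symm wv, h3, T.apply_symm_apply wv⟩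
  have hcolmap : ∀ c, ∃ W, LineSub W ∧ Submodule.map T.toLinearMap (colSub K c) = W := by
    intro c
    have h1 : ∀ X ∈ Submodule.map T.toLinearMap (colSub K c), IsLine X := by
      rintro X ⟨x, hx, rfl⟩
      exact lineT x (Or.inr ⟨c, hx⟩)
    obtain ⟨W, hW, hle⟩ := line_sub_of_forall_line _ h1
    have h2 : ∀ X ∈ Submodule.map T.symm.toLinearMap W, IsLine X := by
      rintro X ⟨x, hx, rfl⟩
      apply lineTsymm
      rcases hW with ⟨a, rfl⟩ | ⟨c', rfl⟩
      · exact Or.inl ⟨a, hx⟩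
      · exact Or.inr ⟨c', hx⟩
    obtain ⟨Z, hZ, hle2⟩ := line_sub_of_forall_line _ h2
    have hRZ : colSub K c ≤ Z := by
      intro X hX
      have h3 : T.symm (T X) = X := T.symm_apply_apply X
      have h4 : T X ∈ W := hle ⟨X, hX, rfl⟩
      have h5 : T.symm (T X) ∈ Submodule.map T.symm.toLinearMap W := ⟨T X, h4, rfl⟩
      rw [h3] at h5
      exact hle2 h5
    have hZeq : Z = colSub K c := by
      rcases hZ with ⟨a, rfl⟩ | ⟨c', rfl⟩
      · exact absurd hRZ (colSub_not_le_rowSub hn)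
      · rw [colSub_le_colSub hn hRZ]
    refine ⟨W, hW, le_antisymm hle ?_⟩
    intro wv hwv
    have h3 : T.symm wv ∈ colSub K c := by
      rw [← hZeq]
      exact hle2 ⟨wv, hwv, rfl⟩
    exact ⟨T.symm wv, h3, T.apply_symm_apply wv⟩
  -- mixed row images are impossible
  have mixed : ∀ (r r' a b : Fin n), r ≠ r' →
      Submodule.map T.toLinearMap (rowSub K r) = rowSub K a →
      Submodule.map T.toLinearMap (rowSub K r') = colSub K b → False := by
    intro r r' a b hrr h1 h2
    have m1 : cell K a b ∈ Submodule.map T.toLinearMap (rowSub K r) := by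
      rw [h1]; exact cell_mem_rowSub a b
    have m2 : cell K a b ∈ Submodule.map T.toLinearMap (rowSub K r') := by
      rw [h2]; exact cell_mem_colSub a b
    obtain ⟨x, hx, hTx⟩ := m1
    obtain ⟨y, hy, hTy⟩ := m2
    have hxy : x = y := T.injective (hTx.trans hTy.symm)
    have hx0 : x = 0 := by
      funext k l
      rcases ne_or_eq k r with hk | rfl
      · exact hx k l hk
      · exact hxy ▸ hy k l hrr
    rw [hx0, map_zero] at hTx
    have h9 := congrFun (congrFun hTx a) b
    simp [cell] at h9
  -- uniform type of row images
  have htype : (∀ r, ∃ a, Submodule.map T.toLinearMap (rowSub K r) = rowSub K a)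
      ∨ (∀ r, ∃ b, Submodule.map T.toLinearMap (rowSub K r) = colSub K b) := by
    by_cases hex : ∃ r a, Submodule.map T.toLinearMap (rowSub K r) = rowSub K a
    · left
      intro r
      obtain ⟨r₀, a₀, h₀⟩ := hex
      obtain ⟨W, hW, hWeq⟩ := hrowmap r
      rcases hW with ⟨a, rfl⟩ | ⟨b, rfl⟩
      · exact ⟨a, hWeq⟩
      · exfalso
        rcases eq_or_ne r r₀ with rfl | hne
        · rw [h₀] at hWeq
          exact rowSub_not_le_colSub hn (le_of_eq hWeq)
        · exact mixed r₀ r a₀ b (Ne.symm hne) h₀ hWeq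
    · right
      push_neg at hex
      intro r
      obtain ⟨W, hW, hWeq⟩ := hrowmap r
      rcases hW with ⟨a, rfl⟩ | ⟨b, rfl⟩
      · exact absurd hWeq (hex r a)
      · exact ⟨b, hWeq⟩
  have hmapinj : ∀ p q : Submodule K (Matrix (Fin n) (Fin n) K),
      Submodule.map T.toLinearMap p = Submodule.map T.toLinearMap q → p = q :=
    fun p q h => Submodule.map_injective_of_injective T.injective h
  rcases htype with hrows | hrows
  · -- CASE 1 : rows go to rows
    left
    choose ρ0 hρ0 using hrows
    have hρinj : Function.Injective ρ0 := by
      intro r r' h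
      have h1 : Submodule.map T.toLinearMap (rowSub K r)
          = Submodule.map T.toLinearMap (rowSub K r') := by rw [hρ0 r, hρ0 r', h]
      exact rowSub_le_rowSub hn (le_of_eq (hmapinj _ _ h1))
    let ρe : Equiv.Perm (Fin n) := Equiv.ofBijective ρ0 (Finite.injective_iff_bijective.mp hρinj)
    have hρe : ∀ r, ρe r = ρ0 r := fun r => rfl
    -- columns go to columns
    have hcols : ∀ c, ∃ b, Submodule.map T.toLinearMap (colSub K c) = colSub K b := by
      intro c
      obtain ⟨W, hW, hWeq⟩ := hcolmap c
      rcases hW with ⟨a, rfl⟩ | ⟨b, rfl⟩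
      · exfalso
        have ha : ρ0 (ρe.symm a) = a := ρe.apply_symm_apply a
        have h1 : Submodule.map T.toLinearMap (colSub K c)
            = Submodule.map T.toLinearMap (rowSub K (ρe.symm a)) := by
          rw [hWeq, hρ0, ha]
        exact colSub_not_le_rowSub hn (le_of_eq (hmapinj _ _ h1))
      · exact ⟨b, hWeq⟩
    choose κ0 hκ0 using hcols
    have hκinj : Function.Injective κ0 := by
      intro c c' h
      have h1 : Submodule.map T.toLinearMap (colSub K c)
          = Submodule.map T.toLinearMap (colSub K c') := by rw [hκ0 c, hκ0 c', h]
      exact colSub_le_colSub hn (le_of_eq (hmapinj _ _ h1))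
    let κe : Equiv.Perm (Fin n) := Equiv.ofBijective κ0 (Finite.injective_iff_bijective.mp hκinj)
    have hκe : ∀ c, κe c = κ0 c := fun c => rfl
    refine ⟨ρe, κe, ?_⟩
    intro i j
    have hmr : T (cell K i j) ∈ rowSub K (ρ0 i) := by
      rw [← hρ0]
      exact ⟨cell K i j, cell_mem_rowSub i j, rfl⟩
    have hmc : T (cell K i j) ∈ colSub K (κ0 j) := by
      rw [← hκ0]
      exact ⟨cell K i j, cell_mem_colSub i j, rfl⟩
    constructor
    · funext k l
      rcases ne_or_eq k (ρ0 i) with hk | rfl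
      · rw [hmr k l hk]
        simp [Matrix.smul_apply, cell, hρe i, hk]
      · rcases ne_or_eq l (κ0 j) with hl | rfl
        · rw [hmc (ρ0 i) l hl]
          simp [Matrix.smul_apply, cell, hκe j, hl]
        · simp [Matrix.smul_apply, cell, hρe i, hκe j]
    · intro h0
      have h1 : T (cell K i j) = 0 := by
        funext k l
        rcases ne_or_eq k (ρ0 i) with hk | rfl
        · exact hmr k l hk
        rcases ne_or_eq l (κ0 j) with hl | rfl
        · exact hmc (ρ0 i) l hl
        · exact h0
      have h2 : cell K i j = (0 : Matrix (Fin n) (Fin n) K) := by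
        have := congrArg (fun X => T.symm X) h1
        simpa using this
      have h9 := congrFun (congrFun h2 i) j
      simp [cell] at h9
  · -- CASE 2 : rows go to columns
    right
    choose μ0 hμ0 using hrows
    have hμinj : Function.Injective μ0 := by
      intro r r' h
      have h1 : Submodule.map T.toLinearMap (rowSub K r)
          = Submodule.map T.toLinearMap (rowSub K r') := by rw [hμ0 r, hμ0 r', h]
      exact rowSub_le_rowSub hn (le_of_eq (hmapinj _ _ h1))
    let μe : Equiv.Perm (Fin n) := Equiv.ofBijective μ0 (Finite.injective_iff_bijective.mp hμinj)
    have hμe : ∀ r, μe r = μ0 r := fun r => rfl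
    have hcols : ∀ c, ∃ a, Submodule.map T.toLinearMap (colSub K c) = rowSub K a := by
      intro c
      obtain ⟨W, hW, hWeq⟩ := hcolmap c
      rcases hW with ⟨a, rfl⟩ | ⟨b, rfl⟩
      · exact ⟨a, hWeq⟩
      · exfalso
        have hb : μ0 (μe.symm b) = b := μe.apply_symm_apply b
        have h1 : Submodule.map T.toLinearMap (colSub K c)
            = Submodule.map T.toLinearMap (rowSub K (μe.symm b)) := by
          rw [hWeq, hμ0, hb]
        exact colSub_not_le_rowSub hn (le_of_eq (hmapinj _ _ h1))
    choose ν0 hν0 using hcols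
    have hνinj : Function.Injective ν0 := by
      intro c c' h
      have h1 : Submodule.map T.toLinearMap (colSub K c)
          = Submodule.map T.toLinearMap (colSub K c') := by rw [hν0 c, hν0 c', h]
      exact colSub_le_colSub hn (le_of_eq (hmapinj _ _ h1))
    let νe : Equiv.Perm (Fin n) := Equiv.ofBijective ν0 (Finite.injective_iff_bijective.mp hνinj)
    have hνe : ∀ c, νe c = ν0 c := fun c => rfl
    refine ⟨νe, μe, ?_⟩
    intro i j
    have hmr : T (cell K i j) ∈ colSub K (μ0 i) := by
      rw [← hμ0]
      exact ⟨cell K i j, cell_mem_rowSub i j, rfl⟩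
    have hmc : T (cell K i j) ∈ rowSub K (ν0 j) := by
      rw [← hν0]
      exact ⟨cell K i j, cell_mem_colSub i j, rfl⟩
    constructor
    · funext k l
      rcases ne_or_eq k (ν0 j) with hk | rfl
      · rw [hmc k l hk]
        simp [Matrix.smul_apply, cell, hνe j, hk]
      · rcases ne_or_eq l (μ0 i) with hl | rfl
        · rw [hmr (ν0 j) l hl]
          simp [Matrix.smul_apply, cell, hμe i, hl]
        · simp [Matrix.smul_apply, cell, hνe j, hμe i]
    · intro h0
      have h1 : T (cell K i j) = 0 := by
        funext k l
        rcases ne_or_eq k (ν0 j) with hk | rfl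
        · exact hmc k l hk
        rcases ne_or_eq l (μ0 i) with hl | rfl
        · exact hmr (ν0 j) l hl
        · exact h0
      have h2 : cell K i j = (0 : Matrix (Fin n) (Fin n) K) := by
        have := congrArg (fun X => T.symm X) h1
        simpa using this
      have h9 := congrFun (congrFun h2 i) j
      simp [cell] at h9

end GdetAux7

namespace GdetAux8
open Equiv GdetAux GdetAux2 GdetAux3 GdetAux6

variable {K : Type*} [Field K] {n : ℕ}

lemma sum_cell_eval (f : Fin n → Fin n → K) (ρ κ : Equiv.Perm (Fin n)) (k l : Fin n) :
    (∑ i, ∑ j, f i j • cell K (ρ i) (κ j)) k l = f (ρ.symm k) (κ.symm l) := by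
  classical
  rw [show ((∑ i, ∑ j, f i j • cell K (ρ i) (κ j)) k l)
      = ∑ i, ∑ j, f i j * cell K (ρ i) (κ j) k l by
    simp [Matrix.sum_apply, Matrix.smul_apply]]
  have hinner : ∀ i, ∑ j, f i j * cell K (ρ i) (κ j) k l
      = if k = ρ i then f i (κ.symm l) else 0 := by
    intro i
    rw [Finset.sum_eq_single (κ.symm l)]
    · show f i (κ.symm l) * (if k = ρ i ∧ l = κ (κ.symm l) then (1 : K) else 0)
        = if k = ρ i then f i (κ.symm l) else 0
      rw [Equiv.apply_symm_apply]
      by_cases hk : k = ρ i <;> simp [hk]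
    · intro j _ hj
      have hcond : ¬(k = ρ i ∧ l = κ j) := fun hcond =>
        hj (by rw [hcond.2, Equiv.symm_apply_apply])
      show f i j * (if k = ρ i ∧ l = κ j then (1 : K) else 0) = 0
      rw [if_neg hcond, mul_zero]
    · exact fun h => absurd (Finset.mem_univ _) h
  rw [Finset.sum_congr rfl (fun i _ => hinner i), Finset.sum_eq_single (ρ.symm k)]
  · rw [if_pos (by rw [Equiv.apply_symm_apply])]
  · intro i _ hi
    rw [if_neg (fun h => hi (by rw [h, Equiv.symm_apply_apply]))]
  · exact fun h => absurd (Finset.mem_univ _) h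

lemma sum_cell_eval' (f : Fin n → Fin n → K) (ν μ : Equiv.Perm (Fin n)) (k l : Fin n) :
    (∑ i, ∑ j, f i j • cell K (ν j) (μ i)) k l = f (μ.symm l) (ν.symm k) := by
  classical
  rw [show ((∑ i, ∑ j, f i j • cell K (ν j) (μ i)) k l)
      = ∑ i, ∑ j, f i j * cell K (ν j) (μ i) k l by
    simp [Matrix.sum_apply, Matrix.smul_apply]]
  have hinner : ∀ i, ∑ j, f i j * cell K (ν j) (μ i) k l
      = if l = μ i then f i (ν.symm k) else 0 := by
    intro i
    rw [Finset.sum_eq_single (ν.symm k)]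
    · show f i (ν.symm k) * (if k = ν (ν.symm k) ∧ l = μ i then (1 : K) else 0)
        = if l = μ i then f i (ν.symm k) else 0
      rw [Equiv.apply_symm_apply]
      by_cases hl : l = μ i <;> simp [hl]
    · intro j _ hj
      have hcond : ¬(k = ν j ∧ l = μ i) := fun hcond =>
        hj (by rw [hcond.1, Equiv.symm_apply_apply])
      show f i j * (if k = ν j ∧ l = μ i then (1 : K) else 0) = 0
      rw [if_neg hcond, mul_zero]
    · exact fun h => absurd (Finset.mem_univ _) h
  rw [Finset.sum_congr rfl (fun i _ => hinner i), Finset.sum_eq_single (μ.symm l)]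
  · rw [if_pos (by rw [Equiv.apply_symm_apply])]
  · intro i _ hi
    rw [if_neg (fun h => hi (by rw [h, Equiv.symm_apply_apply]))]
  · exact fun h => absurd (Finset.mem_univ _) h

lemma permMat_mul_apply (σ τ : Equiv.Perm (Fin n)) (A : Matrix (Fin n) (Fin n) K) (k l : Fin n) :
    (permMat K σ * A * permMat K τ) k l = A (σ.symm k) (τ l) := by
  classical
  have h1 : ∀ j, (permMat K σ * A) k j = A (σ.symm k) j := by
    intro j
    rw [Matrix.mul_apply, Finset.sum_eq_single (σ.symm k)]
    · show (if k = σ (σ.symm k) then (1 : K) else 0) * A (σ.symm k) j = A (σ.symm k) j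
      rw [if_pos (by rw [Equiv.apply_symm_apply]), one_mul]
    · intro i _ hi
      show (if k = σ i then (1 : K) else 0) * A i j = 0
      rw [if_neg (fun h => hi (by rw [h, Equiv.symm_apply_apply])), zero_mul]
    · exact fun h => absurd (Finset.mem_univ _) h
  rw [Matrix.mul_apply, Finset.sum_eq_single (τ l)]
  · rw [h1]
    show A (σ.symm k) (τ l) * (if τ l = τ l then (1 : K) else 0) = A (σ.symm k) (τ l)
    rw [if_pos rfl, mul_one]
  · intro j _ hj
    show (permMat K σ * A) k j * (if j = τ l then (1 : K) else 0) = 0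
    rw [if_neg hj, mul_zero]
  · exact fun h => absurd (Finset.mem_univ _) h

lemma sign_contra [CharZero K] (hn : 4 ≤ n) {α β : K} (hαβ : α ≠ β) (hαβ' : α ≠ -β)
    (c' : Fin n → Fin n → K) (hc : ∀ i j, c' i j ≠ 0)
    (hrel : ∀ π : Equiv.Perm (Fin n),
      (if Equiv.Perm.sign π = 1 then β else α) * (∏ i, c' i (π i))
        = (if Equiv.Perm.sign π = 1 then α else β)) : False := by
  classical
  have hF : ∀ π : Equiv.Perm (Fin n), (∏ i, c' i (π i)) ≠ 0 := fun π =>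
    Finset.prod_ne_zero_iff.mpr (fun i _ => hc i (π i))
  by_cases hα : α = 0
  · have hβ : β ≠ 0 := fun h => hαβ (hα.trans h.symm)
    have h1 := hrel 1
    rw [if_pos (by simp), if_pos (by simp), hα] at h1
    rcases mul_eq_zero.mp h1 with h | h
    · exact hβ h
    · exact hF 1 h
  by_cases hβ : β = 0
  · have hx01 : (⟨0, by omega⟩ : Fin n) ≠ ⟨1, by omega⟩ := by simp [Fin.ext_iff]
    have hsπ₀ : Equiv.Perm.sign (Equiv.swap (⟨0, by omega⟩ : Fin n) ⟨1, by omega⟩) = -1 :=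
      Equiv.Perm.sign_swap hx01
    have h1 := hrel (Equiv.swap (⟨0, by omega⟩ : Fin n) ⟨1, by omega⟩)
    rw [if_neg (by rw [hsπ₀]; decide), if_neg (by rw [hsπ₀]; decide), hβ] at h1
    rcases mul_eq_zero.mp h1 with h | h
    · exact hα h
    · exact hF _ h
  · -- both nonzero
    have star : ∀ x y a b : Fin n, x ≠ y → a ≠ b →
        β ^ 2 * (c' x a * c' y b) = α ^ 2 * (c' x b * c' y a) := by
      intro x y a b hxy hab
      obtain ⟨π, hπx, hπy, hπs⟩ := exists_perm_two_sign hn hxy hab 1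
      have hyx : y ∈ Finset.univ.erase x := Finset.mem_erase.mpr ⟨hxy.symm, Finset.mem_univ y⟩
      have Fdec : ∀ g : Fin n → Fin n, (∏ i, c' i (g i))
          = c' x (g x) * (c' y (g y) * ∏ i ∈ (Finset.univ.erase x).erase y, c' i (g i)) := by
        intro g
        rw [← Finset.mul_prod_erase Finset.univ (fun i => c' i (g i)) (Finset.mem_univ x),
          ← Finset.mul_prod_erase (Finset.univ.erase x) (fun i => c' i (g i)) hyx]
      set π' := π * Equiv.swap x y with hπ'
      have hπ'x : π' x = b := by rw [hπ']; simp [Equiv.Perm.mul_apply, hπy]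
      have hπ'y : π' y = a := by rw [hπ']; simp [Equiv.Perm.mul_apply, hπx]
      have hπ's : Equiv.Perm.sign π' = -1 := by
        rw [hπ', _root_.map_mul, Equiv.Perm.sign_swap hxy, hπs, one_mul]
      have hRsame : ∏ i ∈ (Finset.univ.erase x).erase y, c' i (π' i)
          = ∏ i ∈ (Finset.univ.erase x).erase y, c' i (π i) := by
        apply Finset.prod_congr rfl
        intro i hi
        have hi1 : i ≠ y := (Finset.mem_erase.mp hi).1
        have hi2 : i ≠ x := (Finset.mem_erase.mp (Finset.mem_erase.mp hi).2).1
        rw [hπ']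
        simp [Equiv.Perm.mul_apply, Equiv.swap_apply_of_ne_of_ne hi2 hi1]
      have e1 := hrel π
      rw [if_pos hπs, if_pos hπs, Fdec π, hπx, hπy] at e1
      have e2 := hrel π'
      rw [if_neg (by rw [hπ's]; decide), if_neg (by rw [hπ's]; decide), Fdec π', hπ'x, hπ'y,
        hRsame] at e2
      set R := ∏ i ∈ (Finset.univ.erase x).erase y, c' i (π i) with hR
      have hR0 : R ≠ 0 := Finset.prod_ne_zero_iff.mpr (fun i _ => hc i (π i))
      have key : (β ^ 2 * (c' x a * c' y b)) * R = (α ^ 2 * (c' x b * c' y a)) * R := by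
        linear_combination β * e1 - α * e2
      exact mul_right_cancel₀ hR0 key
    -- three rows, two columns
    have h0 : (⟨0, by omega⟩ : Fin n) ≠ ⟨1, by omega⟩ := by simp [Fin.ext_iff]
    have h1 : (⟨1, by omega⟩ : Fin n) ≠ ⟨2, by omega⟩ := by simp [Fin.ext_iff]
    have h2 : (⟨0, by omega⟩ : Fin n) ≠ ⟨2, by omega⟩ := by simp [Fin.ext_iff]
    set x : Fin n := ⟨0, by omega⟩
    set y : Fin n := ⟨1, by omega⟩
    set z : Fin n := ⟨2, by omega⟩
    set a : Fin n := ⟨0, by omega⟩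
    set b : Fin n := ⟨1, by omega⟩
    have s1 := star x y a b h0 h0
    have s2 := star y z a b h1 h0
    have s3 := star x z a b h2 h0
    have hmul : (β ^ 2 * (c' x a * c' y b)) * (β ^ 2 * (c' y a * c' z b))
        = (α ^ 2 * (c' x b * c' y a)) * (α ^ 2 * (c' y b * c' z a)) := by
      rw [s1, s2]
    have hD : c' y a * c' y b ≠ 0 := mul_ne_zero (hc y a) (hc y b)
    have h4 : β ^ 4 * (c' x a * c' z b) = α ^ 4 * (c' x b * c' z a) := by
      apply mul_right_cancel₀ hD
      linear_combination hmul
    have h5 : α ^ 2 * (α ^ 2 * (c' x b * c' z a)) = α ^ 2 * (β ^ 2 * (c' x b * c' z a)) := by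
      linear_combination β ^ 2 * s3 - h4
    have h6 : α ^ 2 * (c' x b * c' z a) = β ^ 2 * (c' x b * c' z a) :=
      mul_left_cancel₀ (pow_ne_zero 2 hα) h5
    have h7 : α ^ 2 = β ^ 2 :=
      mul_right_cancel₀ (mul_ne_zero (hc x b) (hc z a)) h6
    have h8 : (α - β) * (α + β) = 0 := by linear_combination h7
    rcases mul_eq_zero.mp h8 with h | h
    · exact hαβ (sub_eq_zero.mp h)
    · exact hαβ' (eq_neg_of_add_eq_zero_left h)

end GdetAux8

namespace GdetAux9
open Equiv GdetAux GdetAux2 GdetAux3 GdetAux6 GdetAux7 GdetAux8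

variable {K : Type*} [Field K] {n : ℕ}

lemma sign_step [CharZero K] (hn : 4 ≤ n) {α β : K} (hαβ : α ≠ β) (hαβ' : α ≠ -β)
    (c' : Fin n → Fin n → K) (hc : ∀ i j, c' i j ≠ 0) (g : Equiv.Perm (Fin n) → Equiv.Perm (Fin n))
    (hsgn : ∀ π, Equiv.Perm.sign (g π) = - Equiv.Perm.sign π)
    (hrel : ∀ π, w α β (g π) * (∏ i, c' i (π i)) = w α β π) : False := by
  apply sign_contra hn hαβ hαβ' c' hc
  intro π
  have h := hrel π
  have hw1 : w α β (g π) = (if Equiv.Perm.sign π = 1 then β else α) := by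
    rw [w, hsgn π]
    rcases Int.units_eq_one_or (Equiv.Perm.sign π) with h3 | h3 <;> rw [h3] <;> norm_num
  have hw2 : w α β π = (if Equiv.Perm.sign π = 1 then α else β) := rfl
  rw [hw1, hw2] at h
  exact h

theorem main_thm [CharZero K]
    (hn : 4 ≤ n) (α β : K) (hαβ : α ≠ β) (hαβ' : α ≠ -β)
    (T : Matrix (Fin n) (Fin n) K ≃ₗ[K] Matrix (Fin n) (Fin n) K)
    (hT : ∀ A, gdet α β (T A) = gdet α β A) :
    ∃ (σ τ : Equiv.Perm (Fin n)) (C : Matrix (Fin n) (Fin n) K),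
      Equiv.Perm.sign σ * Equiv.Perm.sign τ = 1 ∧
      (∀ i j : Fin n, C i j ≠ 0) ∧
      ((∀ A, T A = Matrix.hadamard C (permMat K σ * A * permMat K τ)) ∨
       (∀ A, T A = Matrix.hadamard C (permMat K σ * Aᵀ * permMat K τ))) := by
  classical
  rcases structure_cases hn hαβ hαβ' T hT with ⟨ρ, κ, hcells⟩ | ⟨ν, μ, hcells⟩
  · -- CASE 1
    set c' : Fin n → Fin n → K := fun i j => T (cell K i j) (ρ i) (κ j) with hc'
    have hc : ∀ i j, c' i j ≠ 0 := fun i j => (hcells i j).2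
    have Trep : ∀ (A : Matrix (Fin n) (Fin n) K) (k l : Fin n),
        T A k l = A (ρ.symm k) (κ.symm l) * c' (ρ.symm k) (κ.symm l) := by
      intro A k l
      have h1 : T A = ∑ i, ∑ j, (A i j * c' i j) • cell K (ρ i) (κ j) := by
        conv_lhs => rw [matrix_eq_sum_cells A]
        rw [map_sum]
        apply Finset.sum_congr rfl
        intro i _
        rw [map_sum]
        apply Finset.sum_congr rfl
        intro j _
        rw [_root_.map_smul, (hcells i j).1, smul_smul]
      rw [h1, sum_cell_eval]
    have hTind : ∀ π : Equiv.Perm (Fin n),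
        T (Matrix.of fun k l => if l = π k then (1 : K) else 0)
        = Matrix.of fun k l => if l = (κ * π * ρ⁻¹) k
            then c' (ρ.symm k) (π (ρ.symm k)) else 0 := by
      intro π
      funext k l
      rw [Trep]
      show (if κ.symm l = π (ρ.symm k) then (1 : K) else 0) * c' (ρ.symm k) (κ.symm l) = _
      by_cases h : κ.symm l = π (ρ.symm k)
      · have h2 : l = (κ * π * ρ⁻¹) k := by
          show l = κ (π (ρ⁻¹ k))
          rw [show (ρ⁻¹ : Equiv.Perm (Fin n)) k = ρ.symm k from rfl, ← h,
            Equiv.apply_symm_apply]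
        rw [if_pos h, one_mul, h]
        show c' (ρ.symm k) (π (ρ.symm k)) = Matrix.of _ k l
        rw [Matrix.of_apply, if_pos h2]
      · have h2 : ¬ (l = (κ * π * ρ⁻¹) k) := by
          intro hl
          apply h
          rw [hl]
          show κ.symm (κ (π (ρ⁻¹ k))) = π (ρ.symm k)
          rw [Equiv.symm_apply_apply]
          rfl
        rw [if_neg h, zero_mul]
        show (0 : K) = Matrix.of _ k l
        rw [Matrix.of_apply, if_neg h2]
    have REL : ∀ π : Equiv.Perm (Fin n),
        w α β (κ * π * ρ⁻¹) * (∏ i, c' i (π i)) = w α β π := by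
      intro π
      have h1 := hT (Matrix.of fun k l => if l = π k then (1 : K) else 0)
      rw [hTind π, gdet_permlike, gdet_permlike] at h1
      rw [Equiv.prod_comp ρ.symm (fun i => c' i (π i))] at h1
      rw [h1]
      simp
    have hsign : Equiv.Perm.sign ρ * Equiv.Perm.sign κ.symm = 1 := by
      by_contra hs
      rw [Equiv.Perm.sign_symm] at hs
      have hprod : Equiv.Perm.sign ρ * Equiv.Perm.sign κ = -1 := by
        rcases Int.units_eq_one_or (Equiv.Perm.sign ρ * Equiv.Perm.sign κ) with h | h
        · exact absurd h hs
        · exact h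
      apply sign_step hn hαβ hαβ' c' hc (fun π => κ * π * ρ⁻¹) _ REL
      intro π
      rw [_root_.map_mul, _root_.map_mul, Equiv.Perm.sign_inv]
      rcases Int.units_eq_one_or (Equiv.Perm.sign ρ) with h1 | h1 <;>
        rcases Int.units_eq_one_or (Equiv.Perm.sign κ) with h2 | h2 <;>
          rw [h1, h2] at hprod ⊢ <;>
            rcases Int.units_eq_one_or (Equiv.Perm.sign π) with h3 | h3 <;>
              rw [h3] <;> first | decide | (exact absurd hprod (by decide))
    refine ⟨ρ, κ.symm, Matrix.of fun k l => c' (ρ.symm k) (κ.symm l), hsign, ?_, Or.inl ?_⟩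
    · intro i j
      exact hc _ _
    · intro A
      funext k l
      rw [Matrix.hadamard_apply, permMat_mul_apply, Trep]
      show A (ρ.symm k) (κ.symm l) * c' (ρ.symm k) (κ.symm l)
        = c' (ρ.symm k) (κ.symm l) * A (ρ.symm k) (κ.symm l)
      exact mul_comm _ _
  · -- CASE 2 (transpose)
    set c' : Fin n → Fin n → K := fun i j => T (cell K i j) (ν j) (μ i) with hc'
    have hc : ∀ i j, c' i j ≠ 0 := fun i j => (hcells i j).2
    have Trep : ∀ (A : Matrix (Fin n) (Fin n) K) (k l : Fin n),
        T A k l = A (μ.symm l) (ν.symm k) * c' (μ.symm l) (ν.symm k) := by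
      intro A k l
      have h1 : T A = ∑ i, ∑ j, (A i j * c' i j) • cell K (ν j) (μ i) := by
        conv_lhs => rw [matrix_eq_sum_cells A]
        rw [map_sum]
        apply Finset.sum_congr rfl
        intro i _
        rw [map_sum]
        apply Finset.sum_congr rfl
        intro j _
        rw [_root_.map_smul, (hcells i j).1, smul_smul]
      rw [h1, sum_cell_eval']
    have hTind : ∀ π : Equiv.Perm (Fin n),
        T (Matrix.of fun k l => if l = π k then (1 : K) else 0)
        = Matrix.of fun k l => if l = (μ * π⁻¹ * ν⁻¹) k
            then c' (π.symm (ν.symm k)) (ν.symm k) else 0 := by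
      intro π
      funext k l
      rw [Trep]
      show (if ν.symm k = π (μ.symm l) then (1 : K) else 0) * c' (μ.symm l) (ν.symm k) = _
      by_cases h : ν.symm k = π (μ.symm l)
      · have h3 : μ.symm l = π.symm (ν.symm k) := by rw [h, Equiv.symm_apply_apply]
        have h2 : l = (μ * π⁻¹ * ν⁻¹) k := by
          show l = μ (π⁻¹ (ν⁻¹ k))
          rw [show (π⁻¹ : Equiv.Perm (Fin n)) (ν⁻¹ k) = π.symm (ν.symm k) from rfl, ← h3,
            Equiv.apply_symm_apply]
        rw [if_pos h, one_mul, h3]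
        show c' (π.symm (ν.symm k)) (ν.symm k) = Matrix.of _ k l
        rw [Matrix.of_apply, if_pos h2]
      · have h2 : ¬ (l = (μ * π⁻¹ * ν⁻¹) k) := by
          intro hl
          apply h
          rw [hl]
          show ν.symm k = π (μ.symm (μ (π⁻¹ (ν⁻¹ k))))
          rw [Equiv.symm_apply_apply]
          show ν.symm k = π (π.symm (ν.symm k))
          rw [Equiv.apply_symm_apply]
        rw [if_neg h, zero_mul]
        show (0 : K) = Matrix.of _ k l
        rw [Matrix.of_apply, if_neg h2]
    have REL : ∀ π : Equiv.Perm (Fin n),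
        w α β (μ * π⁻¹ * ν⁻¹) * (∏ i, c' i (π i)) = w α β π := by
      intro π
      have h1 := hT (Matrix.of fun k l => if l = π k then (1 : K) else 0)
      rw [hTind π, gdet_permlike, gdet_permlike] at h1
      have hprodeq : (∏ k, c' (π.symm (ν.symm k)) (ν.symm k)) = ∏ i, c' i (π i) := by
        rw [Equiv.prod_comp ν.symm (fun m => c' (π.symm m) m)]
        rw [← Equiv.prod_comp π (fun m => c' (π.symm m) m)]
        apply Finset.prod_congr rfl
        intro i _
        rw [Equiv.symm_apply_apply]
      rw [hprodeq] at h1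
      rw [h1]
      simp
    have hsign : Equiv.Perm.sign ν * Equiv.Perm.sign μ.symm = 1 := by
      by_contra hs
      rw [Equiv.Perm.sign_symm] at hs
      have hprod : Equiv.Perm.sign ν * Equiv.Perm.sign μ = -1 := by
        rcases Int.units_eq_one_or (Equiv.Perm.sign ν * Equiv.Perm.sign μ) with h | h
        · exact absurd h hs
        · exact h
      apply sign_step hn hαβ hαβ' c' hc (fun π => μ * π⁻¹ * ν⁻¹) _ REL
      intro π
      rw [_root_.map_mul, _root_.map_mul, Equiv.Perm.sign_inv, Equiv.Perm.sign_inv]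
      rcases Int.units_eq_one_or (Equiv.Perm.sign ν) with h1 | h1 <;>
        rcases Int.units_eq_one_or (Equiv.Perm.sign μ) with h2 | h2 <;>
          rw [h1, h2] at hprod ⊢ <;>
            rcases Int.units_eq_one_or (Equiv.Perm.sign π) with h3 | h3 <;>
              rw [h3] <;> first | decide | (exact absurd hprod (by decide))
    refine ⟨ν, μ.symm, Matrix.of fun k l => c' (μ.symm l) (ν.symm k), hsign, ?_, Or.inr ?_⟩
    · intro i j
      exact hc _ _
    · intro A
      funext k l
      rw [Matrix.hadamard_apply, permMat_mul_apply, Trep]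
      show A (μ.symm l) (ν.symm k) * c' (μ.symm l) (ν.symm k)
        = c' (μ.symm l) (ν.symm k) * Aᵀ (ν.symm k) (μ.symm l)
      rw [Matrix.transpose_apply]
      exact mul_comm _ _

end GdetAux9

/-- for `n ≥ 4` and `α ≠ ±β`, if `T` stabilizes `det^{(α,β)}`, then
`T(A) = C ∗ (P·A·Q)` for all `A`, or `T(A) = C ∗ (P·Aᵀ·Q)` for all `A`, where `P, Q` are
permutation matrices of permutations `σ, τ` with `sgn σ · sgn τ = 1`, the matrix `C` has all
entries nonzero, and `∗` is the Hadamard product. -/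
theorem stab_gdet_hadamard_form {K : Type*} [Field K] [CharZero K]
    {n : ℕ} (hn : 4 ≤ n) (α β : K) (hαβ : α ≠ β) (hαβ' : α ≠ -β)
    (T : Matrix (Fin n) (Fin n) K ≃ₗ[K] Matrix (Fin n) (Fin n) K)
    (hT : ∀ A, gdet α β (T A) = gdet α β A) :
    ∃ (σ τ : Equiv.Perm (Fin n)) (C : Matrix (Fin n) (Fin n) K),
      Equiv.Perm.sign σ * Equiv.Perm.sign τ = 1 ∧
      (∀ i j : Fin n, C i j ≠ 0) ∧
      ((∀ A, T A = Matrix.hadamard C (permMat K σ * A * permMat K τ)) ∨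
       (∀ A, T A = Matrix.hadamard C (permMat K σ * Aᵀ * permMat K τ))) :=
  GdetAux9.main_thm hn α β hαβ hαβ' T hT
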